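/- Let T be a measure-preserving (not necessarily ergodic) transformation of a probability space (X, F, μ), and let (f_n)_{n≥1} be measurable functions X → ℝ ∪ {−∞} with the positive part f_1^+ integrable, satisfying f_{n+m}(x) ≤ f_n(T^m x) + f_m(x) for μ-a.e. x and all n, m ≥ 1. Define F(x) = limsup_{n→∞} f_n(x). Then the symmetric difference of the sets {x : F(x) < 0} and {x : lim_{n→∞} (1/n) f_n(x) < 0} has μ-measure zero. -/

import Mathlib

/-!
If `(1/n) f_n` has negative limsup then so has `f_n`; the work is in the converse. On a set `D`
where `f_n ≤ c < 0` for all `n ≥ N`, subadditivity lets each return of the orbit to `D`, at least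
`N` steps after the previous one, contribute another `c`. Cutting at the last return before
`n - N` gives `f_n(x) ≤ c (V_n(x) / N - 1)`, where `V_n(x)` counts the visits to `D` before time
`n`. The maximal ergodic lemma, applied to `ε - 1_D` on the forward-invariant set of points from
which every later orbit point starts a stretch of visit frequency below `ε`, bounds the measure of
that set inside `D` by `ε`. Hence almost every point of `D` visits `D` with positive lower
frequency, and `f_n(x) / n` stays below a negative constant. Countably many such `D` cover
`{limsup f_n < 0}`.
-/

open MeasureTheory Filter Topology

lemma limsup_inv_mul_lt_zero_of_eventually_le {u : ℕ → EReal} {a : ℝ} (ha : a < 0)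
    (h : ∀ᶠ n in atTop, u n ≤ ((a * n : ℝ) : EReal)) :
    limsup (fun n : ℕ => (((n : ℝ)⁻¹ : ℝ) : EReal) * u n) atTop < 0 := by
  refine lt_of_le_of_lt (limsup_le_of_le (by isBoundedDefault) ?_) (EReal.coe_neg'.2 ha)
  filter_upwards [h, eventually_ge_atTop 1] with n hn hn1
  have hn0 : (n : ℝ) ≠ 0 := by positivity
  calc (((n : ℝ)⁻¹ : ℝ) : EReal) * u n ≤ (((n : ℝ)⁻¹ : ℝ) : EReal) * ((a * n : ℝ) : EReal) :=
        mul_le_mul_of_nonneg_left hn (EReal.coe_nonneg.2 (by positivity))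
    _ = a := by rw [← EReal.coe_mul, mul_comm a, inv_mul_cancel_left₀ hn0]

lemma limsup_lt_zero_of_limsup_inv_mul_lt_zero {u : ℕ → EReal}
    (h : limsup (fun n : ℕ => (((n : ℝ)⁻¹ : ℝ) : EReal) * u n) atTop < 0) :
    limsup u atTop < 0 := by
  obtain ⟨r, hr, hr0⟩ := EReal.exists_between_coe_real h
  refine lt_of_le_of_lt (limsup_le_of_le (by isBoundedDefault) ?_) hr0
  filter_upwards [eventually_lt_of_limsup_lt hr, eventually_ge_atTop 1] with n hn hn1
  have hn1' : (1 : ℝ) ≤ n := by exact_mod_cast hn1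
  calc u n = (n : ℝ) * ((((n : ℝ)⁻¹ : ℝ) : EReal) * u n) := by
        rw [← mul_assoc, ← EReal.coe_mul, mul_inv_cancel₀ (by positivity), EReal.coe_one, one_mul]
    _ ≤ (n : ℝ) * r := mul_le_mul_of_nonneg_left hn.le (EReal.coe_nonneg.2 (by positivity))
    _ ≤ r := by
      rw [← EReal.coe_mul, EReal.coe_le_coe_iff]
      nlinarith [EReal.coe_neg'.1 hr0]

lemma exists_forall_le_neg_inv_of_limsup_lt_zero {u : ℕ → EReal} (h : limsup u atTop < 0) :
    ∃ j N : ℕ, ∀ n, N + 1 ≤ n → u n ≤ ((-((j : ℝ) + 1)⁻¹ : ℝ) : EReal) := by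
  obtain ⟨r, hr, hr0⟩ := EReal.exists_between_coe_real h
  obtain ⟨j, hj⟩ := exists_nat_one_div_lt (neg_pos.2 (EReal.coe_neg'.1 hr0))
  obtain ⟨N, hN⟩ := eventually_atTop.1 (eventually_lt_of_limsup_lt hr)
  refine ⟨j, N, fun n hn => (hN n (by omega)).le.trans (EReal.coe_le_coe_iff.2 ?_)⟩
  rw [one_div] at hj
  linarith

section BirkhoffSum

variable {X : Type*} {T : X → X} {g : X → ℝ}

lemma partialSups_birkhoffSum_nonneg (T : X → X) (g : X → ℝ) (N : ℕ) :
    0 ≤ partialSups (birkhoffSum T g) N :=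
  (birkhoffSum_zero' T g).symm.le.trans (le_partialSups_of_le _ N.zero_le)

lemma partialSups_birkhoffSum_le (T : X → X) (g : X → ℝ) (N : ℕ) (x : X) :
    partialSups (birkhoffSum T g) N x ≤ max 0 (g x + partialSups (birkhoffSum T g) N (T x)) := by
  rw [Pi.partialSups_apply]
  refine partialSups_le _ _ _ fun k hk => ?_
  rcases k with _ | k
  · simp [birkhoffSum_zero]
  · rw [birkhoffSum_succ']
    exact le_max_of_le_right (by gcongr; exact le_partialSups_of_le (birkhoffSum T g) (by omega) _)

lemma setOf_exists_birkhoffSum_pos_eq_iUnion (T : X → X) (g : X → ℝ) :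
    {x | ∃ n, 0 < birkhoffSum T g n x} = ⋃ N, {x | 0 < partialSups (birkhoffSum T g) N x} := by
  ext x
  simp only [Set.mem_ofPred_eq, Set.mem_iUnion, Pi.partialSups_apply, ← not_le, partialSups_le_iff]
  push Not
  exact ⟨fun ⟨n, hn⟩ => ⟨n, n, le_rfl, hn⟩, fun ⟨_, n, _, hn⟩ => ⟨n, hn⟩⟩

lemma birkhoffSum_indicator_of_mapsTo {Z : Set X} (hZ : Set.MapsTo T Z Z) {x : X} (hx : x ∈ Z)
    (n : ℕ) : birkhoffSum T (Z.indicator g) n x = birkhoffSum T g n x :=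
  Finset.sum_congr rfl fun k _ => Set.indicator_of_mem (hZ.iterate k hx) g

lemma exists_birkhoffSum_iterate_lt (hg : 0 ≤ g) {δ : ℝ} (hδ : 0 ≤ δ) {x : X}
    (h : ∃ᶠ n in atTop, birkhoffSum T g n x < δ * n) (m : ℕ) :
    ∃ n : ℕ, birkhoffSum T g n (T^[m] x) < 2 * δ * n := by
  obtain ⟨n, hn, hmn⟩ := (h.and_eventually (eventually_ge_atTop (2 * m))).exists
  refine ⟨n - m, ?_⟩
  have hsplit := birkhoffSum_add T g m (n - m) x
  rw [Nat.add_sub_cancel' (by omega)] at hsplit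
  have hm : 0 ≤ birkhoffSum T g m x := Finset.sum_nonneg fun k _ => hg _
  have hcast : (2 * m : ℝ) ≤ n := by exact_mod_cast hmn
  rw [Nat.cast_sub (by omega)]
  nlinarith

lemma birkhoffSum_le_of_le_one (hg : g ≤ 1) (n : ℕ) (x : X) : birkhoffSum T g n x ≤ n := by
  simpa [birkhoffSum] using Finset.sum_le_sum fun k (_ : k ∈ Finset.range n) => hg (T^[k] x)

lemma birkhoffSum_add_le_of_forall_eq_zero (hg : g ≤ 1) {x : X} {a b : ℕ} (hab : a ≤ b)
    (h0 : ∀ t, a ≤ t → t < b → g (T^[t] x) = 0) (k : ℕ) :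
    birkhoffSum T g (b + k) x ≤ birkhoffSum T g a x + k := by
  have hab' : birkhoffSum T g b x = birkhoffSum T g a x := by
    rw [← Nat.add_sub_cancel' hab, birkhoffSum_add, add_eq_left]
    refine Finset.sum_eq_zero fun j hj => ?_
    rw [← Function.iterate_add_apply]
    exact h0 _ (by omega) (by have := Finset.mem_range.1 hj; omega)
  rw [birkhoffSum_add, hab']
  gcongr
  exact birkhoffSum_le_of_le_one hg k _

lemma exists_iterate_mem_birkhoffSum_indicator_le_add {D : Set X} {x : X} (hx : x ∈ D) {N n : ℕ}
    (hN : 0 < N) (hn : N ≤ n) : ∃ v ≤ n - N, T^[v] x ∈ D ∧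
      birkhoffSum T (D.indicator (1 : X → ℝ)) n x ≤ birkhoffSum T (D.indicator 1) v x + N := by
  classical
  set v := Nat.findGreatest (fun t => T^[t] x ∈ D) (n - N)
  have h1 : D.indicator (1 : X → ℝ) ≤ 1 := Set.indicator_le_self' fun _ _ => zero_le_one
  have hv : v ≤ n - N := Nat.findGreatest_le _
  have hgap := birkhoffSum_add_le_of_forall_eq_zero (T := T) (x := x) h1
    (show v + 1 ≤ n + 1 - N by omega) (fun t ht ht' => Set.indicator_of_notMem
      (Nat.findGreatest_is_greatest (P := fun t => T^[t] x ∈ D) (n := n - N) (by omega) (by omega)) 1)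
    (N - 1)
  rw [show n + 1 - N + (N - 1) = n by omega, birkhoffSum_succ, Nat.cast_pred hN] at hgap
  have hv1 : D.indicator (1 : X → ℝ) (T^[v] x) ≤ 1 := h1 _
  refine ⟨v, hv, Nat.findGreatest_spec (P := fun t => T^[t] x ∈ D) (Nat.zero_le _) hx, ?_⟩
  linarith

lemma le_mul_birkhoffSum_indicator_sub_one {f : ℕ → X → EReal} {D : Set X} {c : ℝ} (hc : c < 0)
    {N : ℕ} (hN : 0 < N) (hD : ∀ y ∈ D, ∀ n, N ≤ n → f n y ≤ c) {x : X} (hx : x ∈ D)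
    (hsub : ∀ n m, 1 ≤ n → 1 ≤ m → f (n + m) x ≤ f n (T^[m] x) + f m x) (n : ℕ) (hn : N ≤ n) :
    f n x ≤ ((c * (birkhoffSum T (D.indicator 1) n x / N - 1) : ℝ) : EReal) := by
  induction n using Nat.strong_induction_on with
  | _ n ih =>
  set V := fun k => birkhoffSum T (D.indicator (1 : X → ℝ)) k x
  have hNpos : (0 : ℝ) < N := by exact_mod_cast hN
  obtain ⟨v, hvn, hvD, hcount⟩ := exists_iterate_mem_birkhoffSum_indicator_le_add (T := T) hx hN hn
  have hcount' : V n / N - 1 ≤ V v / N := by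
    rw [sub_le_iff_le_add, div_add_one hNpos.ne', div_le_div_iff_of_pos_right hNpos]
    exact hcount
  rcases lt_or_ge v N with hvN | hvN
  · have hVv : V v ≤ v :=
      birkhoffSum_le_of_le_one (Set.indicator_le_self' fun _ _ => zero_le_one) v x
    have hvN' : (v : ℝ) < N := by exact_mod_cast hvN
    have hle : V n / N - 1 ≤ 1 := by
      rw [sub_le_iff_le_add, one_add_one_eq_two, div_le_iff₀ hNpos]
      linarith
    calc f n x ≤ c := hD x hx n hn
      _ ≤ _ := EReal.coe_le_coe_iff.2 (by nlinarith)
  · calc f n x = f ((n - v) + v) x := by rw [Nat.sub_add_cancel (by omega)]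
      _ ≤ f (n - v) (T^[v] x) + f v x := hsub _ _ (by omega) (by omega)
      _ ≤ c + ((c * (V v / N - 1) : ℝ) : EReal) :=
        add_le_add (hD _ hvD _ (by omega)) (ih v (by omega) hvN)
      _ = ((c * (V v / N) : ℝ) : EReal) := by rw [← EReal.coe_add]; ring_nf
      _ ≤ _ := EReal.coe_le_coe_iff.2 (mul_le_mul_of_nonpos_left hcount' hc.le)

variable [MeasurableSpace X] {μ : Measure X}

lemma measurable_birkhoffSum (hT : Measurable T) (hg : Measurable g) (n : ℕ) :
    Measurable (birkhoffSum T g n) :=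
  Finset.measurable_sum _ fun k _ => hg.comp (hT.iterate k)

lemma measurable_partialSups_birkhoffSum (hT : Measurable T) (hg : Measurable g) (N : ℕ) :
    Measurable (partialSups (birkhoffSum T g) N) := by
  induction N with
  | zero => simpa using measurable_birkhoffSum hT hg 0
  | succ N ih => simpa using ih.sup (measurable_birkhoffSum hT hg (N + 1))

namespace MeasureTheory.MeasurePreserving

lemma integrable_birkhoffSum (hT : MeasurePreserving T μ μ) (hg : Integrable g μ) (n : ℕ) :
    Integrable (birkhoffSum T g n) μ :=
  integrable_finsetSum _ fun k _ => (hT.iterate k).integrable_comp_of_integrable hg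

lemma integrable_partialSups_birkhoffSum (hT : MeasurePreserving T μ μ)
    (hg : Integrable g μ) (N : ℕ) : Integrable (partialSups (birkhoffSum T g) N) μ := by
  induction N with
  | zero => simp
  | succ N ih => simpa using ih.sup (hT.integrable_birkhoffSum hg (N + 1))

lemma setIntegral_partialSups_birkhoffSum_pos_nonneg (hT : MeasurePreserving T μ μ)
    (hgm : Measurable g) (hg : Integrable g μ) (N : ℕ) :
    0 ≤ ∫ x in {x | 0 < partialSups (birkhoffSum T g) N x}, g x ∂μ := by
  set M := partialSups (birkhoffSum T g) N
  set E := {x | 0 < M x}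
  have hMm : Measurable M := measurable_partialSups_birkhoffSum hT.measurable hgm N
  have hE : MeasurableSet E := measurableSet_lt measurable_const hMm
  have hMi : Integrable M μ := hT.integrable_partialSups_birkhoffSum hg N
  have hMTi : Integrable (M ∘ T) μ := hT.integrable_comp_of_integrable hMi
  have hM0 : 0 ≤ M := partialSups_birkhoffSum_nonneg T g N
  have hMT : ∫ x, M (T x) ∂μ = ∫ x, M x ∂μ := by
    rw [← integral_map hT.measurable.aemeasurable (hT.map_eq ▸ hMm.aestronglyMeasurable),
      hT.map_eq]
  calc (0 : ℝ) = ∫ x, M x ∂μ - ∫ x, M (T x) ∂μ := by rw [hMT, sub_self]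
    _ ≤ ∫ x in E, M x ∂μ - ∫ x in E, M (T x) ∂μ := by
      refine sub_le_sub (setIntegral_eq_integral_of_forall_compl_eq_zero fun x hx =>
        le_antisymm (not_lt.1 hx) (hM0 x)).ge ?_
      exact setIntegral_le_integral hMTi (Eventually.of_forall fun x => hM0 (T x))
    _ = ∫ x in E, (M x - M (T x)) ∂μ := (integral_sub hMi.integrableOn hMTi.integrableOn).symm
    _ ≤ ∫ x in E, g x ∂μ := by
      refine setIntegral_mono_on (hMi.sub hMTi).integrableOn hg.integrableOn hE fun x hx => ?_
      have := partialSups_birkhoffSum_le T g N x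
      have hx : 0 < M x := hx
      rw [le_max_iff] at this
      rcases this with h | h <;> linarith

theorem maximal_ergodic_ineq (hT : MeasurePreserving T μ μ) (hgm : Measurable g)
    (hg : Integrable g μ) : 0 ≤ ∫ x in {x | ∃ n, 0 < birkhoffSum T g n x}, g x ∂μ := by
  rw [setOf_exists_birkhoffSum_pos_eq_iUnion]
  refine ge_of_tendsto' (tendsto_setIntegral_of_monotone (fun N => ?_) (fun N N' h x hx => ?_)
    hg.integrableOn) (hT.setIntegral_partialSups_birkhoffSum_pos_nonneg hgm hg)
  · exact measurableSet_lt measurable_const (measurable_partialSups_birkhoffSum hT.measurable hgm N)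
  · exact lt_of_lt_of_le hx (partialSups_monotone (birkhoffSum T g) h x)

lemma setIntegral_nonneg_of_mapsTo (hT : MeasurePreserving T μ μ) (hgm : Measurable g)
    {Z : Set X} (hZm : MeasurableSet Z) (hg : IntegrableOn g Z μ) (hZ : Set.MapsTo T Z Z)
    (hZpos : Z ⊆ {x | ∃ n, 0 < birkhoffSum T g n x}) : 0 ≤ ∫ x in Z, g x ∂μ := by
  have hsub : Z ⊆ {x | ∃ n, 0 < birkhoffSum T (Z.indicator g) n x} := fun x hx => by
    simpa only [Set.mem_ofPred_eq, birkhoffSum_indicator_of_mapsTo hZ hx] using hZpos hx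
  have := hT.maximal_ergodic_ineq (hgm.indicator hZm) ((integrable_indicator_iff hZm).2 hg)
  rwa [setIntegral_indicator hZm, Set.inter_eq_right.2 hsub] at this

lemma measureReal_inter_le_of_mapsTo [IsFiniteMeasure μ] (hT : MeasurePreserving T μ μ)
    {D Z : Set X} (hD : MeasurableSet D) (hZm : MeasurableSet Z) (hZ : Set.MapsTo T Z Z)
    {δ : ℝ} (hZlt : Z ⊆ {x | ∃ n : ℕ, birkhoffSum T (D.indicator 1) n x < δ * n}) :
    μ.real (Z ∩ D) ≤ δ * μ.real Z := by
  have hD1 : Integrable (D.indicator 1) μ := (integrable_const (1 : ℝ)).indicator hD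
  have hg : Integrable (fun x => δ - D.indicator 1 x) μ := (integrable_const δ).sub hD1
  have hpos : Z ⊆ {x | ∃ n, 0 < birkhoffSum T (fun x => δ - D.indicator 1 x) n x} := by
    intro x hx
    obtain ⟨n, hn⟩ := hZlt hx
    refine ⟨n, ?_⟩
    simp only [birkhoffSum, Finset.sum_sub_distrib, Finset.sum_const, Finset.card_range,
      nsmul_eq_mul] at hn ⊢
    linarith
  have := hT.setIntegral_nonneg_of_mapsTo (g := fun x => δ - D.indicator 1 x)
    (measurable_const.sub (measurable_const.indicator hD)) hZm hg.integrableOn hZ hpos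
  rw [integral_sub (integrable_const δ).integrableOn hD1.integrableOn,
    setIntegral_const, setIntegral_indicator hD] at this
  simp only [smul_eq_mul, Pi.one_apply, integral_const, MeasurableSet.univ,
    measureReal_restrict_apply, Set.univ_inter, mul_one, sub_nonneg] at this
  linarith

theorem ae_exists_pos_eventually_le_birkhoffSum_indicator [IsFiniteMeasure μ]
    (hT : MeasurePreserving T μ μ) {D : Set X} (hD : MeasurableSet D) :
    ∀ᵐ x ∂μ, x ∈ D → ∃ δ > (0 : ℝ), ∀ᶠ n in atTop, δ * n ≤ birkhoffSum T (D.indicator 1) n x := by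
  set V := birkhoffSum T (D.indicator (1 : X → ℝ))
  set Z : ℝ → Set X := fun ε => ⋂ m, T^[m] ⁻¹' {x | ∃ n : ℕ, V n x < ε * n}
  have hZm : ∀ ε, MeasurableSet (Z ε) := fun ε =>
    MeasurableSet.iInter fun m => hT.measurable.iterate m <| measurableSet_setOfPred.2 <|
      Measurable.exists fun n => measurableSet_setOfPred.1 <| measurableSet_lt
        (measurable_birkhoffSum hT.measurable (measurable_const.indicator hD) n) measurable_const
  have hZ : ∀ ε, Set.MapsTo T (Z ε) (Z ε) := fun ε x hx => Set.mem_iInter.2 fun m => by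
    simpa only [Set.mem_preimage, Function.iterate_succ_apply] using Set.mem_iInter.1 hx (m + 1)
  have hbad : ∀ ε > 0,
      {x | ¬(x ∈ D → ∃ δ > 0, ∀ᶠ n in atTop, δ * n ≤ V n x)} ⊆ Z (2 * ε) ∩ D := by
    intro ε hε x hx
    simp only [Set.mem_ofPred_eq, Classical.not_imp, not_exists, not_and, not_eventually,
      not_le] at hx
    exact ⟨Set.mem_iInter.2 (exists_birkhoffSum_iterate_lt
      (Set.indicator_nonneg fun _ _ => zero_le_one) hε.le (hx.2 ε hε)), hx.1⟩
  have hbound : ∀ ε > 0, μ.real (Z ε ∩ D) ≤ ε * μ.real Set.univ := fun ε hε =>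
    (hT.measureReal_inter_le_of_mapsTo hD (hZm ε) (hZ ε) (fun x hx => Set.mem_iInter.1 hx 0)).trans
      (by gcongr; exacts [measure_ne_top μ _, Set.subset_univ _])
  have hlim : Tendsto (fun ε : ℝ => 2 * ε * μ.real Set.univ) (𝓝[>] 0) (𝓝 0) :=
    tendsto_nhdsWithin_of_tendsto_nhds (Continuous.tendsto' (by fun_prop) 0 0 (by simp))
  rw [ae_iff, ← measureReal_eq_zero_iff]
  refine le_antisymm (ge_of_tendsto hlim (eventually_nhdsWithin_of_forall fun ε hε => ?_))
    measureReal_nonneg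
  exact (measureReal_mono (hbad ε hε)).trans (hbound (2 * ε) (mul_pos two_pos hε))

theorem ae_limsup_inv_mul_lt_zero [IsFiniteMeasure μ] (hT : MeasurePreserving T μ μ)
    {f : ℕ → X → EReal}
    (hsub : ∀ᵐ x ∂μ, ∀ n m, 1 ≤ n → 1 ≤ m → f (n + m) x ≤ f n (T^[m] x) + f m x)
    {D : Set X} (hDm : MeasurableSet D) {c : ℝ} (hc : c < 0) {N : ℕ} (hN : 0 < N)
    (hD : ∀ y ∈ D, ∀ n, N ≤ n → f n y ≤ c) :
    ∀ᵐ x ∂μ, x ∈ D → limsup (fun n : ℕ => (((n : ℝ)⁻¹ : ℝ) : EReal) * f n x) atTop < 0 := by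
  filter_upwards [hT.ae_exists_pos_eventually_le_birkhoffSum_indicator hDm, hsub]
    with x hdens hsubx hx
  obtain ⟨δ, hδ, hV⟩ := hdens hx
  have hNpos : (0 : ℝ) < N := by exact_mod_cast hN
  refine limsup_inv_mul_lt_zero_of_eventually_le (a := c * δ / (2 * N))
    (div_neg_of_neg_of_pos (mul_neg_of_neg_of_pos hc hδ) (by positivity)) ?_
  filter_upwards [hV, eventually_ge_atTop N, eventually_ge_atTop ⌈2 * N / δ⌉₊] with n hVn hNn hn
  refine (le_mul_birkhoffSum_indicator_sub_one hc hN hD hx hsubx n hNn).trans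
    (EReal.coe_le_coe_iff.2 ?_)
  have h2N : 2 * N ≤ δ * n := by
    rw [← div_le_iff₀' hδ]
    exact Nat.ceil_le.1 hn
  have hδn : δ * n / (2 * N) ≤ birkhoffSum T (D.indicator 1) n x / N - 1 := by
    rw [le_sub_iff_add_le, div_add_one (by positivity), div_le_div_iff₀ (by positivity) hNpos]
    nlinarith
  calc _ ≤ c * (δ * n / (2 * N)) := mul_le_mul_of_nonpos_left hδn hc.le
    _ = c * δ / (2 * N) * n := by ring

end MeasureTheory.MeasurePreserving

end BirkhoffSum

theorem subadditive_symmDiff_null_general {X : Type*} [MeasurableSpace X] {μ : Measure X}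
    [IsProbabilityMeasure μ] (T : X → X) (hT : MeasurePreserving T μ μ)
    (f : ℕ → X → EReal) (hmeas : ∀ n, Measurable (f n))
    (hsub : ∀ n m, 1 ≤ n → 1 ≤ m →
      ∀ᵐ x ∂μ, f (n + m) x ≤ f n (T^[m] x) + f m x) :
    μ (symmDiff {x | limsup (fun n => f n x) atTop < 0}
        {x | limsup (fun n : ℕ => (((n : ℝ)⁻¹ : ℝ) : EReal) * f n x) atTop < 0}) = 0 := by
  have hsub_ae : ∀ᵐ x ∂μ, ∀ n m, 1 ≤ n → 1 ≤ m → f (n + m) x ≤ f n (T^[m] x) + f m x := by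
    simpa only [ae_all_iff, eventually_imp_distrib_left] using hsub
  have hlevel : ∀ᵐ x ∂μ, ∀ j N : ℕ,
      (∀ n, N + 1 ≤ n → f n x ≤ ((-((j : ℝ) + 1)⁻¹ : ℝ) : EReal)) →
      limsup (fun n : ℕ => (((n : ℝ)⁻¹ : ℝ) : EReal) * f n x) atTop < 0 := by
    refine ae_all_iff.2 fun j => ae_all_iff.2 fun N =>
      hT.ae_limsup_inv_mul_lt_zero hsub_ae (D := {y | ∀ n, N + 1 ≤ n → f n y ≤ _}) ?_
        (by simp only [Left.neg_neg_iff, inv_pos]; positivity) N.succ_pos fun y hy => hy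
    simp only [Set.ofPred_forall]
    exact .iInter fun n => .iInter fun _ => measurableSet_le (hmeas n) measurable_const
  rw [measure_symmDiff_eq_zero_iff]
  refine EventuallyLE.antisymm ?_
    (LE.le.eventuallyLE fun x => limsup_lt_zero_of_limsup_inv_mul_lt_zero)
  filter_upwards [hlevel] with x hx hA
  obtain ⟨j, N, hjN⟩ := exists_forall_le_neg_inv_of_limsup_lt_zero hA
  exact hx j N hjN

/-- For a measure-preserving (not necessarily ergodic) transformation and a subadditive
sequence of measurable functions with values in `ℝ ∪ {-∞}` whose first positive part is
integrable, the set where `limsup f n < 0` agrees, up to a `μ`-null set, with the set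
where the a.e. limit `lim (1/n) f n < 0` (expressed as a limsup in `EReal`). -/
theorem subadditive_symmDiff_null {X : Type*} [MeasurableSpace X] {μ : Measure X}
    [IsProbabilityMeasure μ] (T : X → X) (hT : MeasurePreserving T μ μ)
    (f : ℕ → X → EReal) (hmeas : ∀ n, Measurable (f n))
    (hne : ∀ n x, f n x ≠ ⊤)
    (hpos : Integrable (fun x => ((f 1 x) ⊔ 0).toReal) μ)
    (hsub : ∀ n m, 1 ≤ n → 1 ≤ m →
      ∀ᵐ x ∂μ, f (n + m) x ≤ f n (T^[m] x) + f m x) :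
    μ (symmDiff {x | limsup (fun n => f n x) atTop < 0}
        {x | limsup (fun n : ℕ => (((n : ℝ)⁻¹ : ℝ) : EReal) * f n x) atTop < 0}) = 0 :=
  subadditive_symmDiff_null_general T hT f hmeas hsub
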